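/- arXiv:2201.08963 — 2 statements merged into one kernel-verified Lean document; each statement's English description precedes it below -/
import Mathlib

section
/- Every vertex-coarse-graining λ : G₁ → G₂ of causal-nets factors as λ = λ_m ∘ λ_con where λ_con : G₁ → K is a contraction and λ_m : K → G₂ is a merging; this factorization is unique up to an isomorphism of K compatible with the factorizations. -/
open CategoryTheory

namespace CausalNets

/-- Acyclicity condition for raw directed-multigraph data: every directed cycle
has length zero. -/
def NoCycleData (V E : Type) (s t : E → V) : Prop :=
  letI : Quiver V := ⟨fun a b => { e : E // s e = a ∧ t e = b }⟩
  ∀ (v : V) (p : Quiver.Path v v), p.length = 0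

/-- A causal-net: a finite acyclic directed multigraph (isolated vertices and
parallel edges allowed). -/
structure CausalNet where
  V : Type
  E : Type
  src : E → V
  tgt : E → V
  fintypeV : Fintype V
  fintypeE : Fintype E
  acyclic : NoCycleData V E src tgt

attribute [instance] CausalNet.fintypeV CausalNet.fintypeE

instance CausalNet.quiver (G : CausalNet) : Quiver G.V :=
  ⟨fun a b => { e : G.E // G.src e = a ∧ G.tgt e = b }⟩

/-- The category `Cau` of causal-nets: a morphism `G ⟶ H` is a functor between
the path categories `Paths G.V ⥤ Paths H.V`. -/
instance : Category CausalNet where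
  Hom G H := Paths G.V ⥤ Paths H.V
  id G := 𝟭 (Paths G.V)
  comp φ ψ := φ ⋙ ψ

variable {G H K : CausalNet}

/-- The action of a morphism of causal-nets on vertices (objects). -/
def vmap (φ : G ⟶ H) : G.V → H.V := (φ : Paths G.V ⥤ Paths H.V).obj

/-- The action of a morphism of causal-nets on directed paths (morphisms). -/
def pmap (φ : G ⟶ H) {a b : G.V} (p : Quiver.Path a b) :
    Quiver.Path (vmap φ a) (vmap φ b) :=
  (φ : Paths G.V ⥤ Paths H.V).map p

/-- The quiver arrow corresponding to an edge. -/
def edgeHom (G : CausalNet) (e : G.E) : G.src e ⟶ G.tgt e := ⟨e, rfl, rfl⟩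

/-- The directed path which is the image of the edge `e` under the morphism `φ`. -/
def edgePath (φ : G ⟶ H) (e : G.E) :
    Quiver.Path (vmap φ (G.src e)) (vmap φ (G.tgt e)) :=
  pmap φ (Quiver.Hom.toPath (edgeHom G e))

/-- The underlying edge of a quiver arrow. -/
def homEdge {a b : G.V} (f : a ⟶ b) : G.E := Subtype.val f

/-- The list of edges traversed by a directed path. -/
def pathEdges : {a b : G.V} → Quiver.Path a b → List G.E
  | _, _, Quiver.Path.nil => []
  | _, _, Quiver.Path.cons p f => pathEdges p ++ [homEdge f]

/-- The list of vertices visited by a directed path (including endpoints). -/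
def pathVertices : {a b : G.V} → Quiver.Path a b → List G.V
  | a, _, Quiver.Path.nil => [a]
  | _, b, Quiver.Path.cons p _ => pathVertices p ++ [b]

/-- An edge `e` is a contraction of `φ` if `φ(e)` has length `0`. -/
def IsContractionEdge (φ : G ⟶ H) (e : G.E) : Prop := (edgePath φ e).length = 0

/-- An edge `e` is a segment of `φ` if `φ(e)` has length `1`. -/
def IsSegmentEdge (φ : G ⟶ H) (e : G.E) : Prop := (edgePath φ e).length = 1

/-- An edge `e` is a subdivision of `φ` if `φ(e)` has length at least `2`. -/
def IsSubdivisionEdge (φ : G ⟶ H) (e : G.E) : Prop := 2 ≤ (edgePath φ e).length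

/-- `φ` maps the edge `e` to the length-one path consisting of the edge `h`. -/
def MapsToEdge (φ : G ⟶ H) (e : G.E) (h : H.E) : Prop :=
  pathEdges (edgePath φ e) = [h]

/-- A quotient: a morphism with no null-vertex and no null-edge. -/
def IsQuotientMor (φ : G ⟶ H) : Prop :=
  (∀ v : H.V, ∃ w : G.V, vmap φ w = v) ∧ ∀ h : H.E, ∃ e : G.E, MapsToEdge φ e h

/-- A coarse-graining: a quotient with no subdivision. -/
def IsCoarseGraining (φ : G ⟶ H) : Prop :=
  IsQuotientMor φ ∧ ∀ e : G.E, ¬ IsSubdivisionEdge φ e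

/-- A vertex-coarse-graining: a coarse-graining with no multiple-edge. -/
def IsVertexCoarseGraining (φ : G ⟶ H) : Prop :=
  IsCoarseGraining φ ∧
  ∀ (h : H.E) (e₁ e₂ : G.E), MapsToEdge φ e₁ h → MapsToEdge φ e₂ h → e₁ = e₂

/-- An edge-coarse-graining: a coarse-graining with no multiple-vertex and no
contraction. -/
def IsEdgeCoarseGraining (φ : G ⟶ H) : Prop :=
  IsCoarseGraining φ ∧ Function.Injective (vmap φ) ∧ ∀ e : G.E, ¬ IsContractionEdge φ e

/-- A merging: a vertex-coarse-graining with no contraction. -/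
def IsMerging (φ : G ⟶ H) : Prop :=
  IsVertexCoarseGraining φ ∧ ∀ e : G.E, ¬ IsContractionEdge φ e

/-- A fusion: a coarse-graining with no contraction. -/
def IsFusion (φ : G ⟶ H) : Prop :=
  IsCoarseGraining φ ∧ ∀ e : G.E, ¬ IsContractionEdge φ e

/-- An inclusion: a morphism injective on vertices and on directed paths
(an injective-on-objects faithful functor). -/
def IsInclusion (φ : G ⟶ H) : Prop :=
  Function.Injective (vmap φ) ∧
  ∀ (a b : G.V) (p q : Quiver.Path a b), pmap φ p = pmap φ q → p = q

/-- An embedding: an inclusion with no subdivision. -/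
def IsEmbedding (φ : G ⟶ H) : Prop :=
  IsInclusion φ ∧ ∀ e : G.E, ¬ IsSubdivisionEdge φ e

/-- An immersion: an inclusion such that images of distinct subdivision edges
share no edge. -/
def IsImmersion (φ : G ⟶ H) : Prop :=
  IsInclusion φ ∧
  ∀ e₁ e₂ : G.E, e₁ ≠ e₂ → IsSubdivisionEdge φ e₁ → IsSubdivisionEdge φ e₂ →
    ∀ h : H.E, h ∈ pathEdges (edgePath φ e₁) → h ∉ pathEdges (edgePath φ e₂)

/-- The internal vertices of a directed path (all visited vertices except the
two endpoints). -/
def internalVertices {a b : G.V} (p : Quiver.Path a b) : List G.V :=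
  ((pathVertices p).dropLast).tail

/-- A strong morphism: all internal vertices of images of subdivision edges are
null-vertices. -/
def IsStrong (φ : G ⟶ H) : Prop :=
  ∀ e : G.E, IsSubdivisionEdge φ e →
    ∀ v ∈ internalVertices (edgePath φ e), ∀ w : G.V, vmap φ w ≠ v

/-- A vertex-disjoint morphism: images of distinct subdivision edges share no
internal vertex. -/
def IsVertexDisjoint (φ : G ⟶ H) : Prop :=
  ∀ e₁ e₂ : G.E, e₁ ≠ e₂ → IsSubdivisionEdge φ e₁ → IsSubdivisionEdge φ e₂ →
    ∀ v : H.V, v ∈ internalVertices (edgePath φ e₁) → v ∉ internalVertices (edgePath φ e₂)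

/-- A topological embedding: a strong vertex-disjoint inclusion. -/
def IsTopologicalEmbedding (φ : G ⟶ H) : Prop :=
  IsInclusion φ ∧ IsStrong φ ∧ IsVertexDisjoint φ

/-- The edge `e` covers the vertex `v` if `v` occurs on the path `φ(e)`. -/
def Covers (φ : G ⟶ H) (e : G.E) (v : H.V) : Prop :=
  v ∈ pathVertices (edgePath φ e)

/-- An isolated vertex: a vertex incident to no edge. -/
def IsolatedVertex (G : CausalNet) (v : G.V) : Prop :=
  ∀ e : G.E, G.src e ≠ v ∧ G.tgt e ≠ v

/-- A subdivision morphism: a topological embedding such that every non-isolated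
vertex of the codomain is covered and every isolated vertex of the codomain is a
simple-vertex. -/
def IsSubdivisionMor (φ : G ⟶ H) : Prop :=
  IsTopologicalEmbedding φ ∧
  (∀ v : H.V, ¬ IsolatedVertex H v → ∃ e : G.E, Covers φ e v) ∧
  (∀ v : H.V, IsolatedVertex H v → ∃! w : G.V, vmap φ w = v)

theorem mapPath_length {V W : Type} [Quiver V] [Quiver W] (F : V ⥤q W) :
    ∀ {a b : V} (p : Quiver.Path a b), (F.mapPath p).length = p.length := by
  intro a b p
  induction p with
  | nil => rfl
  | cons q f ih =>
      show ((F.mapPath q).cons (F.map f)).length = (q.cons f).length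
      rw [Quiver.Path.length_cons, Quiver.Path.length_cons, ih]

theorem noCycleData_of_map {V₁ E₁ : Type} (s₁ t₁ : E₁ → V₁) (G : CausalNet)
    (f : V₁ → G.V) (g : E₁ → G.E)
    (hs : ∀ e, G.src (g e) = f (s₁ e)) (ht : ∀ e, G.tgt (g e) = f (t₁ e)) :
    NoCycleData V₁ E₁ s₁ t₁ := by
  letI : Quiver V₁ := ⟨fun a b => { e : E₁ // s₁ e = a ∧ t₁ e = b }⟩
  intro v p
  let F : V₁ ⥤q G.V :=
    { obj := f
      map := fun {a b} e =>
        ⟨g (Subtype.val e), by rw [hs, (Subtype.prop e).1], by rw [ht, (Subtype.prop e).2]⟩ }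
  have h := G.acyclic (f v) (F.mapPath p)
  rw [mapPath_length] at h
  exact h

theorem noCycleData_of_lt {V E : Type} [Preorder V] (s t : E → V)
    (hlt : ∀ e, s e < t e) : NoCycleData V E s t := by
  letI : Quiver V := ⟨fun a b => { e : E // s e = a ∧ t e = b }⟩
  have key : ∀ {a b : V} (p : Quiver.Path a b), (a = b ∧ p.length = 0) ∨ a < b := by
    intro a b p
    induction p with
    | nil => exact Or.inl ⟨rfl, rfl⟩
    | cons q f ih =>
        have hcb := hlt (Subtype.val f)
        rw [(Subtype.prop f).1, (Subtype.prop f).2] at hcb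
        rcases ih with ⟨h, _⟩ | h
        · exact Or.inr (by rw [h]; exact hcb)
        · exact Or.inr (lt_trans h hcb)
  intro v p
  rcases key p with ⟨_, h⟩ | h
  · exact h
  · exact absurd h (lt_irrefl v)

/-- The sub-causal-net spanned by a set of vertices and a set of edges. -/
noncomputable def mkSub (G : CausalNet) (Vs : Set G.V) (Es : Set G.E)
    (hs : ∀ e ∈ Es, G.src e ∈ Vs) (ht : ∀ e ∈ Es, G.tgt e ∈ Vs) : CausalNet where
  V := Vs
  E := Es
  src e := ⟨G.src e.1, hs e.1 e.2⟩
  tgt e := ⟨G.tgt e.1, ht e.1 e.2⟩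
  fintypeV := Fintype.ofFinite _
  fintypeE := Fintype.ofFinite _
  acyclic := noCycleData_of_map _ _ G Subtype.val Subtype.val (fun _ => rfl) (fun _ => rfl)

/-- The fiber of a morphism at a vertex `v` of the codomain: the sub-causal-net
of the domain on the vertices mapped to `v` and the edges mapped to the identity
path at `v`. -/
noncomputable def fiber (φ : G ⟶ H) (v : H.V) : CausalNet :=
  mkSub G {w : G.V | vmap φ w = v}
    {e : G.E | IsContractionEdge φ e ∧ vmap φ (G.src e) = v}
    (fun _ he => he.2)
    (fun e he =>
      show vmap φ (G.tgt e) = v from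
        Quiver.Path.eq_of_length_zero (edgePath φ e) he.1 ▸ he.2)

/-- The underlying undirected (simple) graph of a causal-net. -/
def undirected (G : CausalNet) : SimpleGraph G.V where
  Adj v w := v ≠ w ∧ ∃ e : G.E, (G.src e = v ∧ G.tgt e = w) ∨ (G.src e = w ∧ G.tgt e = v)
  symm := by
    refine ⟨?_⟩
    rintro v w ⟨hne, e, he⟩
    exact ⟨hne.symm, e, he.symm⟩
  loopless := by
    refine ⟨?_⟩
    intro v h
    exact h.1 rfl

/-- A causal-net is connected if its underlying undirected graph is connected. -/
def Connected (G : CausalNet) : Prop := (undirected G).Connected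

/-- A causal-Tree: a causal-net whose simplification has a tree as underlying
undirected graph.  (Since a causal-net is acyclic, the underlying undirected
graph of its simplification is exactly `undirected G`.) -/
def IsCausalTree (G : CausalNet) : Prop := (undirected G).IsTree

/-- A contraction: a vertex-coarse-graining all of whose fibers are connected. -/
def IsContractionMor (φ : G ⟶ H) : Prop :=
  IsVertexCoarseGraining φ ∧ ∀ v : H.V, Connected (fiber φ v)

/-- A simple contraction: a contraction with exactly one non-trivial fiber, that
fiber consisting of two vertices together with all edges from the first to the
second. -/
def IsSimpleContraction (φ : G ⟶ H) : Prop :=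
  IsContractionMor φ ∧
  ∃ w₁ w₂ : G.V, w₁ ≠ w₂ ∧ vmap φ w₁ = vmap φ w₂ ∧
    (∃ e : G.E, G.src e = w₁ ∧ G.tgt e = w₂) ∧
    (∀ e : G.E, IsContractionEdge φ e ↔ (G.src e = w₁ ∧ G.tgt e = w₂)) ∧
    (∀ u u' : G.V, vmap φ u = vmap φ u' →
      u = u' ∨ ((u = w₁ ∨ u = w₂) ∧ (u' = w₁ ∨ u' = w₂)))

/-- A tree-contraction: a contraction all of whose fibers are causal-Trees. -/
def IsTreeContraction (φ : G ⟶ H) : Prop :=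
  IsContractionMor φ ∧ ∀ v : H.V, IsCausalTree (fiber φ v)

/-- A directed multi-path: a causal-net whose simplification is a directed path. -/
def IsDirectedMultiPath (K : CausalNet) : Prop :=
  ∃ (a b : K.V) (p : Quiver.Path a b),
    (pathVertices p).Nodup ∧ (∀ v : K.V, v ∈ pathVertices p) ∧
    ∀ e : K.E, ∃ h ∈ pathEdges p, K.src e = K.src h ∧ K.tgt e = K.tgt h

/-- A path-contraction: a vertex-coarse-graining all of whose fibers are
directed multi-paths. -/
def IsPathContraction (φ : G ⟶ H) : Prop :=
  IsVertexCoarseGraining φ ∧ ∀ v : H.V, IsDirectedMultiPath (fiber φ v)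

/-- A point: a causal-net with exactly one vertex and no edges. -/
def IsPoint (A : CausalNet) : Prop := (∃ v : A.V, ∀ w : A.V, w = v) ∧ IsEmpty A.E

/-- Reachability: there is a directed path from `a` to `b`. -/
def Reaches (G : CausalNet) (a b : G.V) : Prop := Nonempty (Quiver.Path a b)

/-- A coclique: a set of vertices no two distinct members of which are
comparable under the reachability order. -/
def IsCoclique (G : CausalNet) (S : Set G.V) : Prop :=
  ∀ a ∈ S, ∀ b ∈ S, a ≠ b → ¬ Reaches G a b

/-- A multi-edge: the nonempty set of all edges from one fixed vertex to another. -/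
def IsMultiEdge (G : CausalNet) (s : Set G.E) : Prop :=
  s.Nonempty ∧ ∃ a b : G.V, s = {e : G.E | G.src e = a ∧ G.tgt e = b}

/-- The pair of vertices whose multi-edge is contracted by a simple contraction. -/
def ContractedPair (φ : G ⟶ H) (w₁ w₂ : G.V) : Prop :=
  w₁ ≠ w₂ ∧ vmap φ w₁ = vmap φ w₂ ∧ (∃ e : G.E, G.src e = w₁ ∧ G.tgt e = w₂) ∧
  ∀ e : G.E, IsContractionEdge φ e ↔ (G.src e = w₁ ∧ G.tgt e = w₂)

/-- Two causal-nets are isomorphic in `Cau`. -/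
def IsIsomorphicTo (A B : CausalNet) : Prop := ∃ φ : A ⟶ B, IsIso φ

/-- A simple causal-net: at most one edge between any ordered pair of vertices. -/
def IsSimpleNet (G : CausalNet) : Prop :=
  ∀ e₁ e₂ : G.E, G.src e₁ = G.src e₂ → G.tgt e₁ = G.tgt e₂ → e₁ = e₂

/-- A harmonic causal-net: every fusion out of it is an isomorphism. -/
def Harmonic (G : CausalNet) : Prop :=
  ∀ (H : CausalNet) (φ : G ⟶ H), IsFusion φ → IsIso φ

/-- A hamiltonian path: a directed path visiting every vertex exactly once. -/
def HasHamiltonianPath (G : CausalNet) : Prop :=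
  ∃ (a b : G.V) (p : Quiver.Path a b),
    (pathVertices p).Nodup ∧ ∀ v : G.V, v ∈ pathVertices p

/-- Morphisms which can be written as a composition of finitely many morphisms
each satisfying `P`. -/
inductive IsCompOf (P : ∀ ⦃A B : CausalNet⦄, (A ⟶ B) → Prop) :
    ∀ {A B : CausalNet}, (A ⟶ B) → Prop
  | of {A B : CausalNet} (φ : A ⟶ B) : P φ → IsCompOf P φ
  | comp {A B C : CausalNet} (φ : A ⟶ B) (ψ : B ⟶ C) :
      IsCompOf P φ → IsCompOf P ψ → IsCompOf P (φ ≫ ψ)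

/-!
Let `~` be the equivalence relation on the vertices of `G₁` generated by the contraction edges
of `λ`. A merging sends every edge to an edge, so in any factorization `λ = λ_m ∘ λ_con` the
contraction edges of `λ_con` are exactly those of `λ`; connectedness of the fibers of `λ_con`
then says that `λ_con` identifies exactly the `~`-classes, and since `λ_con` is a
vertex-coarse-graining its edges are the non-contraction edges of `λ`. Hence the contraction
parts of two factorizations lift through each other, and the lifts are mutually inverse because
quotients are epimorphisms. For existence take `K = G₁/~` with the non-contraction edges of `λ`,
through which `λ` factors because it is constant on `~`-classes.
-/

section PathEdges

@[simp]
theorem pathEdges_nil {a : G.V} : pathEdges (Quiver.Path.nil : Quiver.Path a a) = [] := by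
  simp [pathEdges]

@[simp]
theorem pathEdges_cons {a b c : G.V} (p : Quiver.Path a b) (f : b ⟶ c) :
    pathEdges (p.cons f) = pathEdges p ++ [homEdge f] := by
  simp [pathEdges]

@[simp]
theorem pathEdges_toPath {a b : G.V} (f : a ⟶ b) : pathEdges f.toPath = [homEdge f] := by
  simp [Quiver.Hom.toPath]

@[simp]
theorem length_pathEdges {a b : G.V} (p : Quiver.Path a b) :
    (pathEdges p).length = p.length := by
  induction p with
  | nil => simp
  | cons q f ih => simp [ih]

@[simp]
theorem pathEdges_comp {a b c : G.V} (p : Quiver.Path a b) (q : Quiver.Path b c) :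
    pathEdges (p.comp q) = pathEdges p ++ pathEdges q := by
  induction q with
  | nil => simp
  | cons q' f ih => simp [ih]

theorem pathEdges_eq_nil_of_length_eq_zero {a b : G.V} {p : Quiver.Path a b}
    (h : p.length = 0) : pathEdges p = [] := by
  rwa [← List.length_eq_zero_iff, length_pathEdges]

theorem heq_of_pathEdges_eq {a a' b b' : G.V} (p : Quiver.Path a b) (q : Quiver.Path a' b')
    (ha : a = a') (h : pathEdges p = pathEdges q) : HEq p q := by
  subst ha
  induction p generalizing b' with
  | nil =>
    cases q with
    | nil => rfl
    | cons q' g => simp at h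
  | cons p' f ih =>
    cases q with
    | nil => simp at h
    | cons q' g =>
      rw [pathEdges_cons, pathEdges_cons] at h
      obtain ⟨hp, hfg⟩ := List.append_inj' h rfl
      obtain ⟨e, rfl, rfl⟩ := f
      obtain ⟨e', rfl, rfl⟩ := g
      cases (List.singleton_inj.mp hfg : e = e')
      cases eq_of_heq (ih q' hp)
      rfl

theorem exists_pathEdges_eq_singleton {a b : G.V} {p : Quiver.Path a b} (h : p.length = 1) :
    ∃ x, pathEdges p = [x] := by
  cases p with
  | nil => simp at h
  | cons p f =>
    cases p with
    | nil => exact ⟨homEdge f, by simp⟩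
    | cons => simp at h

theorem src_tgt_of_pathEdges_eq_singleton {a b : G.V} {p : Quiver.Path a b} {x : G.E}
    (h : pathEdges p = [x]) : G.src x = a ∧ G.tgt x = b := by
  cases p with
  | nil => simp at h
  | cons p f =>
    cases p with
    | nil =>
      obtain rfl : homEdge f = x := by simpa using h
      exact f.2
    | cons => simpa using congrArg List.length h

theorem length_eqToHom {V : Type*} [Quiver V] {x y : Paths V} (h : x = y) :
    Quiver.Path.length (eqToHom h) = 0 := by
  subst h
  rfl

theorem length_eq_zero_of_eq {a b : G.V} (p : Quiver.Path a b) (h : a = b) :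
    p.length = 0 := by
  subst h
  exact G.acyclic a p

end PathEdges

section Morphisms

theorem pathEdges_pmap_toPath (φ : G ⟶ H) {a b : G.V} (f : a ⟶ b) :
    pathEdges (pmap φ f.toPath) = pathEdges (edgePath φ (homEdge f)) := by
  obtain ⟨e, rfl, rfl⟩ := f
  rfl

theorem pathEdges_pmap (φ : G ⟶ H) {a b : G.V} (p : Quiver.Path a b) :
    pathEdges (pmap φ p) = (pathEdges p).flatMap fun e => pathEdges (edgePath φ e) := by
  induction p with
  | nil =>
    have hnil : pmap φ (Quiver.Path.nil : Quiver.Path a a) = Quiver.Path.nil :=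
      (φ : Paths G.V ⥤ Paths H.V).map_id a
    simp [hnil]
  | cons q f ih =>
    have hcons : pmap φ (q.cons f) = (pmap φ q).comp (pmap φ f.toPath) :=
      (φ : Paths G.V ⥤ Paths H.V).map_comp q f.toPath
    simp [hcons, ih, pathEdges_pmap_toPath]

/-- Comparing edge lists sidesteps the dependent types of the image paths. -/
theorem hom_ext {φ ψ : G ⟶ H} (hV : ∀ a, vmap φ a = vmap ψ a)
    (hE : ∀ e, pathEdges (edgePath φ e) = pathEdges (edgePath ψ e)) : φ = ψ := by
  refine CategoryTheory.Functor.ext hV fun (a b : G.V) p => ?_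
  refine (conj_eqToHom_iff_heq (C := Paths H.V) _ _ (hV a) (hV b)).mpr ?_
  exact heq_of_pathEdges_eq (pmap φ p) (pmap ψ p) (hV a) (by simp only [pathEdges_pmap, hE])

end Morphisms

section EdgeImages

variable {φ : G ⟶ H} {e : G.E} {h : H.E}

theorem isSegmentEdge_iff :
    IsSegmentEdge φ e ↔ ¬IsContractionEdge φ e ∧ ¬IsSubdivisionEdge φ e := by
  unfold IsSegmentEdge IsContractionEdge IsSubdivisionEdge
  omega

theorem IsContractionEdge.not_isSubdivisionEdge (hc : IsContractionEdge φ e) :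
    ¬IsSubdivisionEdge φ e := by
  unfold IsContractionEdge at hc
  unfold IsSubdivisionEdge
  omega

theorem isSegmentEdge_iff_exists_mapsToEdge : IsSegmentEdge φ e ↔ ∃ h, MapsToEdge φ e h := by
  refine ⟨exists_pathEdges_eq_singleton, fun ⟨h, hm⟩ => ?_⟩
  rw [IsSegmentEdge, ← length_pathEdges, hm, List.length_singleton]

theorem MapsToEdge.isSegmentEdge (hm : MapsToEdge φ e h) : IsSegmentEdge φ e :=
  isSegmentEdge_iff_exists_mapsToEdge.mpr ⟨h, hm⟩

theorem MapsToEdge.not_isContractionEdge (hm : MapsToEdge φ e h) : ¬IsContractionEdge φ e :=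
  (isSegmentEdge_iff.mp hm.isSegmentEdge).1

theorem MapsToEdge.unique {h' : H.E} (hm : MapsToEdge φ e h) (hm' : MapsToEdge φ e h') :
    h = h' :=
  List.singleton_inj.mp (hm.symm.trans hm')

theorem MapsToEdge.src_tgt (hm : MapsToEdge φ e h) :
    H.src h = vmap φ (G.src e) ∧ H.tgt h = vmap φ (G.tgt e) :=
  src_tgt_of_pathEdges_eq_singleton hm

theorem MapsToEdge.pathEdges_edgePath_comp (hm : MapsToEdge φ e h) (ψ : H ⟶ K) :
    pathEdges (edgePath (φ ≫ ψ) e) = pathEdges (edgePath ψ h) := by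
  show pathEdges (pmap ψ (edgePath φ e)) = _
  rw [pathEdges_pmap, hm, List.flatMap_singleton]

theorem IsContractionEdge.pathEdges_edgePath_comp (hc : IsContractionEdge φ e) (ψ : H ⟶ K) :
    pathEdges (edgePath (φ ≫ ψ) e) = [] := by
  show pathEdges (pmap ψ (edgePath φ e)) = _
  rw [pathEdges_pmap, pathEdges_eq_nil_of_length_eq_zero hc, List.flatMap_nil]

theorem IsContractionEdge.vmap_src_eq_vmap_tgt (hc : IsContractionEdge φ e) :
    vmap φ (G.src e) = vmap φ (G.tgt e) :=
  Quiver.Path.eq_of_length_zero _ hc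

theorem IsContractionEdge.comp (hc : IsContractionEdge φ e) (ψ : H ⟶ K) :
    IsContractionEdge (φ ≫ ψ) e := by
  rw [IsContractionEdge, ← length_pathEdges, hc.pathEdges_edgePath_comp, List.length_nil]

theorem MapsToEdge.mapsToEdge_comp_iff (hm : MapsToEdge φ e h) {ψ : H ⟶ K} {k : K.E} :
    MapsToEdge (φ ≫ ψ) e k ↔ MapsToEdge ψ h k := by
  rw [MapsToEdge, MapsToEdge, hm.pathEdges_edgePath_comp]

theorem IsCoarseGraining.exists_mapsToEdge (hφ : IsCoarseGraining φ)
    (hc : ¬IsContractionEdge φ e) : ∃ h, MapsToEdge φ e h :=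
  isSegmentEdge_iff_exists_mapsToEdge.mp (isSegmentEdge_iff.mpr ⟨hc, hφ.2 e⟩)

end EdgeImages

noncomputable def homOfMaps (fV : G.V → H.V) (fE : G.E → H.E)
    (hsrc : ∀ e, H.src (fE e) = fV (G.src e)) (htgt : ∀ e, H.tgt (fE e) = fV (G.tgt e)) :
    G ⟶ H :=
  Paths.lift
    { obj := fV
      map := fun f => Quiver.Hom.toPath
        ⟨fE (homEdge f), (hsrc _).trans (congrArg fV f.2.1), (htgt _).trans (congrArg fV f.2.2)⟩ }

theorem mapsToEdge_homOfMaps (fV : G.V → H.V) (fE : G.E → H.E) (hsrc htgt) (e : G.E) :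
    MapsToEdge (homOfMaps fV fE hsrc htgt) e (fE e) := by
  unfold MapsToEdge edgePath pmap homOfMaps
  rw [Paths.lift_toPath]
  exact pathEdges_toPath _

theorem IsQuotientMor.epi {φ : G ⟶ H} (hφ : IsQuotientMor φ) : Epi φ := by
  refine ⟨fun {K} ψ ψ' hψ => hom_ext (fun v => ?_) (fun h => ?_)⟩
  · obtain ⟨w, rfl⟩ := hφ.1 v
    exact congrArg (fun χ : G ⟶ K => vmap χ w) hψ
  · obtain ⟨e, he⟩ := hφ.2 h
    rw [← he.pathEdges_edgePath_comp, ← he.pathEdges_edgePath_comp, hψ]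

theorem exists_comp_eq_of_isVertexCoarseGraining {q : G ⟶ H} (hq : IsVertexCoarseGraining q)
    (F : G ⟶ K) (hV : ∀ a b, vmap q a = vmap q b → vmap F a = vmap F b)
    (hE : ∀ e, IsSegmentEdge q e → IsSegmentEdge F e) : ∃ φ : H ⟶ K, q ≫ φ = F := by
  choose v₀ hv₀ using hq.1.1.1
  choose e₀ he₀ using hq.1.1.2
  choose fE hfE using fun h => isSegmentEdge_iff_exists_mapsToEdge.mp (hE _ (he₀ h).isSegmentEdge)
  have hfV : ∀ a, vmap F (v₀ (vmap q a)) = vmap F a := fun a => hV _ _ (hv₀ _)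
  refine ⟨homOfMaps (fun v => vmap F (v₀ v)) fE (fun h => ?_) (fun h => ?_), hom_ext hfV ?_⟩
  · rw [(hfE h).src_tgt.1, ← hfV, (he₀ h).src_tgt.1]
  · rw [(hfE h).src_tgt.2, ← hfV, (he₀ h).src_tgt.2]
  intro e
  by_cases hc : IsContractionEdge q e
  · -- `F` maps `e` to a closed path, which is trivial by acyclicity.
    rw [hc.pathEdges_edgePath_comp, pathEdges_eq_nil_of_length_eq_zero
      (length_eq_zero_of_eq _ (hV _ _ hc.vmap_src_eq_vmap_tgt))]
  · obtain ⟨h, hm⟩ := hq.1.exists_mapsToEdge hc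
    obtain rfl := hq.2 h _ _ (he₀ h) hm
    rw [hm.pathEdges_edgePath_comp, mapsToEdge_homOfMaps, hfE h]

theorem exists_iso_comp_eq_of_isVertexCoarseGraining {q : G ⟶ H} {q' : G ⟶ K}
    (hq : IsVertexCoarseGraining q) (hq' : IsVertexCoarseGraining q')
    (hV : ∀ a b, vmap q a = vmap q b ↔ vmap q' a = vmap q' b)
    (hE : ∀ e, IsSegmentEdge q e ↔ IsSegmentEdge q' e) : ∃ φ : H ⟶ K, IsIso φ ∧ q ≫ φ = q' := by
  obtain ⟨φ, hφ⟩ := exists_comp_eq_of_isVertexCoarseGraining hq q' (fun a b => (hV a b).mp)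
    (fun e => (hE e).mp)
  obtain ⟨ψ, hψ⟩ := exists_comp_eq_of_isVertexCoarseGraining hq' q (fun a b => (hV a b).mpr)
    (fun e => (hE e).mpr)
  have := hq.1.1.epi
  have := hq'.1.1.epi
  refine ⟨φ, ⟨ψ, ?_, ?_⟩, hφ⟩
  · exact (cancel_epi q).mp (by rw [← Category.assoc, hφ, hψ, Category.comp_id])
  · exact (cancel_epi q').mp (by rw [← Category.assoc, hψ, hφ, Category.comp_id])

def contractionRel (φ : G ⟶ H) (a b : G.V) : Prop :=
  ∃ e, IsContractionEdge φ e ∧ G.src e = a ∧ G.tgt e = b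

section Fibers

variable {φ : G ⟶ H}

theorem vmap_eq_of_eqvGen {a b : G.V} (h : Relation.EqvGen (contractionRel φ) a b) :
    vmap φ a = vmap φ b :=
  Setoid.eqvGen_le (s := Setoid.ker (vmap φ))
    (fun _ _ ⟨_, hc, ha, hb⟩ => ha ▸ hb ▸ hc.vmap_src_eq_vmap_tgt) h

theorem undirected_fiber_adj_iff {v : H.V} {x y : (fiber φ v).V} :
    (undirected (fiber φ v)).Adj x y ↔ x ≠ y ∧ Relation.SymmGen (contractionRel φ) x.1 y.1 := by
  refine and_congr_right fun _ => ⟨?_, ?_⟩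
  · rintro ⟨e, ⟨hs, ht⟩ | ⟨hs, ht⟩⟩
    · exact .inl ⟨e.1, e.2.1, congrArg Subtype.val hs, congrArg Subtype.val ht⟩
    · exact .inr ⟨e.1, e.2.1, congrArg Subtype.val hs, congrArg Subtype.val ht⟩
  · rintro (⟨e, hc, hs, ht⟩ | ⟨e, hc, hs, ht⟩)
    · exact ⟨⟨e, hc, hs ▸ x.2⟩, .inl ⟨Subtype.ext hs, Subtype.ext ht⟩⟩
    · exact ⟨⟨e, hc, hs ▸ y.2⟩, .inr ⟨Subtype.ext hs, Subtype.ext ht⟩⟩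

theorem undirected_fiber_reachable_iff {v : H.V} (x y : (fiber φ v).V) :
    (undirected (fiber φ v)).Reachable x y ↔ Relation.EqvGen (contractionRel φ) x.1 y.1 := by
  rw [SimpleGraph.reachable_iff_reflTransGen, ← Relation.EqvGen.reflTransGen_symmGen]
  refine ⟨fun h => h.lift Subtype.val fun a b hab => (undirected_fiber_adj_iff.mp hab).2, ?_⟩
  rw [← SimpleGraph.reachable_iff_reflTransGen]
  suffices ∀ b, Relation.ReflTransGen (Relation.SymmGen (contractionRel φ)) x.1 b →
      ∃ hb : vmap φ b = v, (undirected (fiber φ v)).Reachable x ⟨b, hb⟩ from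
    fun h => (this y.1 h).2
  intro b h
  induction h with
  | refl => exact ⟨x.2, .rfl⟩
  | @tail b c _ hbc ih =>
    obtain ⟨hb, hxb⟩ := ih
    have hc : vmap φ c = v :=
      (vmap_eq_of_eqvGen (Relation.EqvGen.symmGen_le_eqvGen _ _ _ hbc)).symm.trans hb
    refine ⟨hc, hxb.trans ?_⟩
    by_cases hbc' : b = c
    · subst hbc'
      rfl
    · exact (undirected_fiber_adj_iff.mpr ⟨fun h => hbc' (congrArg Subtype.val h), hbc⟩).reachable

theorem connected_fiber_iff :
    (∀ v, Connected (fiber φ v)) ↔ Function.Surjective (vmap φ) ∧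
      ∀ a b, vmap φ a = vmap φ b → Relation.EqvGen (contractionRel φ) a b := by
  refine ⟨fun h => ⟨fun v => ?_, fun a b hab => ?_⟩, fun ⟨hs, h⟩ v => ?_⟩
  · obtain ⟨w⟩ := (h v).nonempty
    exact ⟨w.1, w.2⟩
  · exact (undirected_fiber_reachable_iff (v := vmap φ a) ⟨a, rfl⟩ ⟨b, hab.symm⟩).mp
      ((h _).preconnected _ _)
  · obtain ⟨a, rfl⟩ := hs v
    exact { preconnected := fun x y => (undirected_fiber_reachable_iff x y).mpr
              (h _ _ (x.2.trans y.2.symm))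
            nonempty := ⟨⟨a, rfl⟩⟩ }

end Fibers

section Mergings

variable {ψ : H ⟶ K}

theorem IsMerging.isSegmentEdge (hψ : IsMerging ψ) (h : H.E) : IsSegmentEdge ψ h :=
  isSegmentEdge_iff.mpr ⟨hψ.2 h, hψ.1.1.2 h⟩

theorem IsMerging.length_pmap (hψ : IsMerging ψ) {a b : H.V} (p : Quiver.Path a b) :
    (pmap ψ p).length = p.length := by
  have hseg : ∀ h, (pathEdges (edgePath ψ h)).length = 1 := fun h => by
    rw [length_pathEdges]
    exact hψ.isSegmentEdge h
  rw [← length_pathEdges, pathEdges_pmap, ← length_pathEdges p]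
  induction pathEdges p with
  | nil => rfl
  | cons h l ih => rw [List.flatMap_cons, List.length_append, ih, hseg, List.length_cons, add_comm]

theorem IsMerging.length_edgePath_comp (hψ : IsMerging ψ) (φ : G ⟶ H) (e : G.E) :
    (edgePath (φ ≫ ψ) e).length = (edgePath φ e).length :=
  hψ.length_pmap (edgePath φ e)

theorem IsMerging.isContractionEdge_comp_iff (hψ : IsMerging ψ) {φ : G ⟶ H} {e : G.E} :
    IsContractionEdge (φ ≫ ψ) e ↔ IsContractionEdge φ e := by
  rw [IsContractionEdge, IsContractionEdge, hψ.length_edgePath_comp]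

theorem IsMerging.contractionRel_comp (hψ : IsMerging ψ) (φ : G ⟶ H) :
    contractionRel (φ ≫ ψ) = contractionRel φ := by
  ext a b
  simp only [contractionRel, hψ.isContractionEdge_comp_iff]

theorem isMerging_of_comp {q : G ⟶ H} (hq : IsCoarseGraining q)
    (hqψ : IsVertexCoarseGraining (q ≫ ψ))
    (hc : ∀ e, IsContractionEdge (q ≫ ψ) e → IsContractionEdge q e) : IsMerging ψ := by
  have hseg : ∀ h, ∃ k, MapsToEdge ψ h k := fun h => by
    obtain ⟨e, he⟩ := hq.1.2 h
    obtain ⟨k, hk⟩ := hqψ.1.exists_mapsToEdge (mt (hc e) he.not_isContractionEdge)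
    exact ⟨k, he.mapsToEdge_comp_iff.mp hk⟩
  have hsegψ : ∀ h, IsSegmentEdge ψ h := fun h => (hseg h).elim fun _ hk => hk.isSegmentEdge
  refine ⟨⟨⟨⟨fun v => ?_, fun k => ?_⟩, fun h => (isSegmentEdge_iff.mp (hsegψ h)).2⟩, ?_⟩,
    fun h => (isSegmentEdge_iff.mp (hsegψ h)).1⟩
  · obtain ⟨w, rfl⟩ := hqψ.1.1.1 v
    exact ⟨vmap q w, rfl⟩
  · obtain ⟨e, he⟩ := hqψ.1.1.2 k
    obtain ⟨h, hh⟩ := hq.exists_mapsToEdge fun hce => he.not_isContractionEdge (hce.comp ψ)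
    exact ⟨h, hh.mapsToEdge_comp_iff.mp he⟩
  · intro k h₁ h₂ hk₁ hk₂
    obtain ⟨e₁, he₁⟩ := hq.1.2 h₁
    obtain ⟨e₂, he₂⟩ := hq.1.2 h₂
    obtain rfl := hqψ.2 k e₁ e₂ (he₁.mapsToEdge_comp_iff.mpr hk₁) (he₂.mapsToEdge_comp_iff.mpr hk₂)
    exact he₁.unique he₂

end Mergings

section ContractionQuotient

variable (φ : G ⟶ H) (hφ : ∀ e, ¬IsSubdivisionEdge φ e)

/-- Acyclic because `φ` maps the remaining edges to edges of `H`. -/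
noncomputable def contractionQuotient : CausalNet where
  V := Quotient (Relation.EqvGen.setoid (contractionRel φ))
  E := {e : G.E // ¬IsContractionEdge φ e}
  src e := Quotient.mk _ (G.src e.1)
  tgt e := Quotient.mk _ (G.tgt e.1)
  fintypeV := Fintype.ofFinite _
  fintypeE := Fintype.ofFinite _
  acyclic := by
    choose fE hfE using fun e : {e : G.E // ¬IsContractionEdge φ e} =>
      isSegmentEdge_iff_exists_mapsToEdge.mp (isSegmentEdge_iff.mpr ⟨e.2, hφ e.1⟩)
    exact noCycleData_of_map _ _ H (Quotient.lift (vmap φ) fun _ _ => vmap_eq_of_eqvGen) fE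
      (fun e => (hfE e).src_tgt.1) (fun e => (hfE e).src_tgt.2)

open Classical in
noncomputable def toContractionQuotient : G ⟶ contractionQuotient φ hφ :=
  Paths.lift
    { obj := fun a => (Quotient.mk _ a : (contractionQuotient φ hφ).V)
      map := fun f =>
        if hc : IsContractionEdge φ (homEdge f) then
          eqToHom (Quotient.sound (Relation.EqvGen.rel _ _ ⟨homEdge f, hc, f.2.1, f.2.2⟩))
        else
          Quiver.Hom.toPath (V := (contractionQuotient φ hφ).V)
            ⟨⟨homEdge f, hc⟩, congrArg (Quotient.mk _) f.2.1, congrArg (Quotient.mk _) f.2.2⟩ }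

variable {φ hφ}

theorem isContractionEdge_toContractionQuotient {e : G.E} (hc : IsContractionEdge φ e) :
    IsContractionEdge (toContractionQuotient φ hφ) e := by
  unfold IsContractionEdge edgePath pmap toContractionQuotient
  rw [Paths.lift_toPath]
  dsimp only
  rw [dif_pos (show IsContractionEdge φ (homEdge (edgeHom G e)) from hc)]
  exact length_eqToHom _

theorem mapsToEdge_toContractionQuotient {e : G.E} (hc : ¬IsContractionEdge φ e) :
    MapsToEdge (toContractionQuotient φ hφ) e ⟨e, hc⟩ := by
  unfold MapsToEdge edgePath pmap toContractionQuotient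
  rw [Paths.lift_toPath]
  dsimp only
  rw [dif_neg (show ¬IsContractionEdge φ (homEdge (edgeHom G e)) from hc)]
  exact pathEdges_toPath _

theorem isContractionEdge_toContractionQuotient_iff {e : G.E} :
    IsContractionEdge (toContractionQuotient φ hφ) e ↔ IsContractionEdge φ e :=
  ⟨fun hc => by_contra fun hc' => (mapsToEdge_toContractionQuotient hc').not_isContractionEdge hc,
    isContractionEdge_toContractionQuotient⟩

theorem contractionRel_toContractionQuotient :
    contractionRel (toContractionQuotient φ hφ) = contractionRel φ := by
  ext a b
  simp only [contractionRel, isContractionEdge_toContractionQuotient_iff]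

theorem isVertexCoarseGraining_toContractionQuotient :
    IsVertexCoarseGraining (toContractionQuotient φ hφ) := by
  refine ⟨⟨⟨Quotient.mk_surjective, fun h => ⟨h.1, mapsToEdge_toContractionQuotient h.2⟩⟩,
    fun e => ?_⟩, fun h e₁ e₂ he₁ he₂ => ?_⟩
  · by_cases hc : IsContractionEdge φ e
    · exact (isContractionEdge_toContractionQuotient hc).not_isSubdivisionEdge
    · exact (isSegmentEdge_iff.mp (mapsToEdge_toContractionQuotient hc).isSegmentEdge).2
  · have hc₁ := isContractionEdge_toContractionQuotient_iff.not.mp he₁.not_isContractionEdge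
    have hc₂ := isContractionEdge_toContractionQuotient_iff.not.mp he₂.not_isContractionEdge
    exact congrArg Subtype.val (((mapsToEdge_toContractionQuotient hc₁).unique he₁).trans
      ((mapsToEdge_toContractionQuotient hc₂).unique he₂).symm)

theorem isContractionMor_toContractionQuotient :
    IsContractionMor (toContractionQuotient φ hφ) :=
  ⟨isVertexCoarseGraining_toContractionQuotient, connected_fiber_iff.mpr ⟨Quotient.mk_surjective,
    fun _ _ h => by rw [contractionRel_toContractionQuotient]; exact Quotient.exact h⟩⟩

end ContractionQuotient

theorem exists_isContractionMor_isMerging_comp_eq {φ : G ⟶ H}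
    (hφ : IsVertexCoarseGraining φ) :
    ∃ (K : CausalNet) (q : G ⟶ K) (ψ : K ⟶ H), IsContractionMor q ∧ IsMerging ψ ∧ q ≫ ψ = φ := by
  have hq := isContractionMor_toContractionQuotient (φ := φ) (hφ := hφ.1.2)
  obtain ⟨ψ, hψ⟩ := exists_comp_eq_of_isVertexCoarseGraining hq.1 φ
    (fun _ _ h => vmap_eq_of_eqvGen (Quotient.exact h))
    (fun e hs => isSegmentEdge_iff.mpr ⟨isContractionEdge_toContractionQuotient_iff.not.mp
      (isSegmentEdge_iff.mp hs).1, hφ.1.2 e⟩)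
  refine ⟨_, _, ψ, hq, isMerging_of_comp hq.1.1 (by rwa [hψ]) fun e hc => ?_, hψ⟩
  rw [hψ] at hc
  exact isContractionEdge_toContractionQuotient_iff.mpr hc

theorem exists_iso_of_isContractionMor_isMerging {K K' : CausalNet} {q : G ⟶ K} {ψ : K ⟶ H}
    {q' : G ⟶ K'} {ψ' : K' ⟶ H} (hq : IsContractionMor q) (hψ : IsMerging ψ)
    (hq' : IsContractionMor q') (hψ' : IsMerging ψ') (h : q ≫ ψ = q' ≫ ψ') :
    ∃ φ : K ⟶ K', IsIso φ ∧ q ≫ φ = q' ∧ φ ≫ ψ' = ψ := by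
  have hrel : contractionRel q = contractionRel q' := by
    rw [← hψ.contractionRel_comp, h, hψ'.contractionRel_comp]
  have hV : ∀ a b, vmap q a = vmap q b ↔ vmap q' a = vmap q' b := fun a b =>
    ⟨fun hab => vmap_eq_of_eqvGen (hrel ▸ (connected_fiber_iff.mp hq.2).2 a b hab),
      fun hab => vmap_eq_of_eqvGen (hrel ▸ (connected_fiber_iff.mp hq'.2).2 a b hab)⟩
  have hE : ∀ e, IsSegmentEdge q e ↔ IsSegmentEdge q' e := fun e => by
    rw [IsSegmentEdge, IsSegmentEdge, ← hψ.length_edgePath_comp, h, hψ'.length_edgePath_comp]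
  obtain ⟨φ, hφ, hqφ⟩ := exists_iso_comp_eq_of_isVertexCoarseGraining hq.1 hq'.1 hV hE
  have := hq.1.1.1.epi
  exact ⟨φ, hφ, hqφ, (cancel_epi q).mp (by rw [← Category.assoc, hqφ, h])⟩

theorem vertexCoarseGraining_factorization {G₁ G₂ : CausalNet} (lam : G₁ ⟶ G₂)
    (hlam : IsVertexCoarseGraining lam) :
    (∃ (K : CausalNet) (lcon : G₁ ⟶ K) (lm : K ⟶ G₂),
        IsContractionMor lcon ∧ IsMerging lm ∧ lcon ≫ lm = lam) ∧
    (∀ (K K' : CausalNet) (lcon : G₁ ⟶ K) (lm : K ⟶ G₂) (lcon' : G₁ ⟶ K') (lm' : K' ⟶ G₂),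
        IsContractionMor lcon → IsMerging lm → lcon ≫ lm = lam →
        IsContractionMor lcon' → IsMerging lm' → lcon' ≫ lm' = lam →
        ∃ φ : K ⟶ K', IsIso φ ∧ lcon ≫ φ = lcon' ∧ φ ≫ lm' = lm) :=
  ⟨exists_isContractionMor_isMerging_comp_eq hlam,
    fun _ _ _ _ _ _ hcon hm hfac hcon' hm' hfac' =>
      exists_iso_of_isContractionMor_isMerging hcon hm hcon' hm' (hfac.trans hfac'.symm)⟩

end CausalNets
end

section
/- For causal-nets H and G, the following are equivalent: (1) H is isomorphic to a sub-causal-net of G; (2) there exists an embedding λ : H → G; (3) H can be obtained from G, up to isomorphism, by a finite sequence of operations of deleting an edge or deleting an isolated vertex. -/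
open CategoryTheory

namespace CausalNets

variable {G H K : CausalNet}

def DeleteEdgeStep (A B : CausalNet) : Prop :=
  ∃ (e₀ : A.E) (fV : B.V ≃ A.V) (fE : B.E ≃ {e : A.E // e ≠ e₀}),
    ∀ h : B.E, A.src (fE h).1 = fV (B.src h) ∧ A.tgt (fE h).1 = fV (B.tgt h)

def DeleteIsolatedVertexStep (A B : CausalNet) : Prop :=
  ∃ v₀ : A.V, IsolatedVertex A v₀ ∧
    ∃ (fV : B.V ≃ {v : A.V // v ≠ v₀}) (fE : B.E ≃ A.E),
      ∀ h : B.E, A.src (fE h) = (fV (B.src h)).1 ∧ A.tgt (fE h) = (fV (B.tgt h)).1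

def SubNetStep (A B : CausalNet) : Prop :=
  DeleteEdgeStep A B ∨ DeleteIsolatedVertexStep A B ∨ IsIsomorphicTo A B

/-!
All three conditions say that `H` is, up to relabelling, a subgraph of `G`: there are injective
maps on vertices and on edges commuting with source and target. Such a pair of maps induces an
embedding of path categories. Conversely an embedding sends every edge to a single edge: it
contracts none, because it is injective on vertices and causal-nets have no loops, and it
subdivides none by definition; faithfulness then makes the induced map on edges injective.
Deleting an edge or an isolated vertex is such a subgraph inclusion, and an inclusion that is
not onto misses an edge, or else misses only vertices, which are then isolated; so induction on
the size of `G` produces the sequence of deletions.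
-/

theorem _root_.Quiver.Hom.toPath_injective {V : Type*} [Quiver V] {a b : V} :
    Function.Injective (Quiver.Hom.toPath : (a ⟶ b) → Quiver.Path a b) :=
  fun _ _ h => eq_of_heq (Quiver.Path.hom_heq_of_cons_eq_cons h)

theorem _root_.Quiver.Path.exists_eq_toPath_of_length_eq_one {V : Type*} [Quiver V] {a b : V}
    (p : Quiver.Path a b) (h : p.length = 1) : ∃ f : a ⟶ b, p = f.toPath := by
  obtain ⟨c, f, q, hq, rfl⟩ := p.eq_toPath_comp_of_length_eq_succ (n := 0) h
  obtain rfl := q.eq_of_length_zero hq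
  obtain rfl := q.eq_nil_of_length_zero hq
  exact ⟨f, rfl⟩

theorem _root_.Prefunctor.mapPath_injective {V W : Type*} [Quiver V] [Quiver W] (F : V ⥤q W)
    (hobj : Function.Injective F.obj)
    (hmap : ∀ {a b : V}, Function.Injective (F.map : (a ⟶ b) → (F.obj a ⟶ F.obj b)))
    {a b : V} : Function.Injective (F.mapPath : Quiver.Path a b → _) := by
  intro p q h
  induction p with
  | nil =>
    cases q with
    | nil => rfl
    | cons q g => exact absurd h (Quiver.Path.nil_ne_cons _ _)
  | cons p f ih =>
    cases q with
    | nil => exact absurd h (Quiver.Path.cons_ne_nil _ _)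
    | cons q g =>
      obtain rfl := hobj (Quiver.Path.obj_eq_of_cons_eq_cons h)
      rw [ih (eq_of_heq (Quiver.Path.heq_of_cons_eq_cons h)),
        hmap (eq_of_heq (Quiver.Path.hom_heq_of_cons_eq_cons h))]

theorem src_ne_tgt (G : CausalNet) (e : G.E) : G.src e ≠ G.tgt e := fun h =>
  one_ne_zero (G.acyclic _ (Quiver.Hom.toPath (⟨e, rfl, h.symm⟩ : G.src e ⟶ G.src e)))

theorem ne_of_hom {a b : G.V} (f : a ⟶ b) : a ≠ b := by
  obtain ⟨e, rfl, rfl⟩ := f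
  exact src_ne_tgt G e

theorem length_eqToHom_comp_comp_eqToHom {V : Type} [Quiver V] {x y z w : Paths V} (h : x = y)
    (p : y ⟶ z) (h' : z = w) :
    Quiver.Path.length (eqToHom h ≫ p ≫ eqToHom h' : x ⟶ w) = p.length := by
  subst h h'
  simp

theorem pmap_cons (φ : G ⟶ H) {a b c : G.V} (p : Quiver.Path a b) (f : b ⟶ c) :
    pmap φ (p.cons f) = (pmap φ p).comp (pmap φ f.toPath) :=
  (φ : Paths G.V ⥤ Paths H.V).map_comp (X := a) p f.toPath

theorem one_le_length_pmap_toPath {φ : G ⟶ H} (hφ : Function.Injective (vmap φ)) {a b : G.V}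
    (f : a ⟶ b) : 1 ≤ (pmap φ f.toPath).length :=
  Nat.one_le_iff_ne_zero.mpr fun h => ne_of_hom f (hφ ((pmap φ f.toPath).eq_of_length_zero h))

theorem length_le_length_pmap {φ : G ⟶ H} (hφ : Function.Injective (vmap φ)) {a b : G.V}
    (p : Quiver.Path a b) : p.length ≤ (pmap φ p).length := by
  induction p with
  | nil => exact Nat.zero_le _
  | cons p f ih =>
    rw [pmap_cons, Quiver.Path.length_comp, Quiver.Path.length_cons]
    exact Nat.add_le_add ih (one_le_length_pmap_toPath hφ f)

section LeftInverse

variable {φ : G ⟶ H} {ψ : H ⟶ G}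

theorem length_pmap_pmap_of_comp_eq_id (h : φ ≫ ψ = 𝟙 G) {a b : G.V} (p : Quiver.Path a b) :
    (pmap ψ (pmap φ p)).length = p.length :=
  (congrArg Quiver.Path.length (Functor.congr_hom h p)).trans
    (length_eqToHom_comp_comp_eqToHom _ _ _)

theorem isInclusion_of_comp_eq_id (h : φ ≫ ψ = 𝟙 G) : IsInclusion φ :=
  ⟨Function.LeftInverse.injective (g := vmap ψ) (Functor.congr_obj h),
    fun _ _ _ _ hpq => (Functor.Faithful.of_comp_eq (H := 𝟭 (Paths G.V)) h).map_injective hpq⟩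

end LeftInverse

theorem isEmbedding_of_isIso (φ : G ⟶ H) [IsIso φ] : IsEmbedding φ := by
  refine ⟨isInclusion_of_comp_eq_id (IsIso.hom_inv_id φ), fun e (he : 2 ≤ (edgePath φ e).length) => ?_⟩
  have hback : (pmap (inv φ) (edgePath φ e)).length = 1 :=
    length_pmap_pmap_of_comp_eq_id (IsIso.hom_inv_id φ) (edgeHom G e).toPath
  have hle := length_le_length_pmap (isInclusion_of_comp_eq_id (IsIso.inv_hom_id φ)).1
    (edgePath φ e)
  omega

theorem IsIsomorphicTo.symm (h : IsIsomorphicTo G H) : IsIsomorphicTo H G :=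
  let ⟨φ, _⟩ := h
  ⟨inv φ, inferInstance⟩

theorem IsEmbedding.length_pmap_toPath {φ : G ⟶ H} (hφ : IsEmbedding φ) {a b : G.V}
    (f : a ⟶ b) : (pmap φ f.toPath).length = 1 := by
  obtain ⟨e, rfl, rfl⟩ := f
  show (edgePath φ e).length = 1
  have hsub : ¬ 2 ≤ (edgePath φ e).length := hφ.2 e
  have hcon := one_le_length_pmap_toPath hφ.1.1 (edgeHom G e)
  exact le_antisymm (by omega) hcon

@[ext]
structure GraphHom (H G : CausalNet) where
  vertex : H.V → G.V
  edge : H.E → G.E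
  src_edge : ∀ e, G.src (edge e) = vertex (H.src e)
  tgt_edge : ∀ e, G.tgt (edge e) = vertex (H.tgt e)

namespace GraphHom

protected def id (G : CausalNet) : GraphHom G G :=
  ⟨id, id, fun _ => rfl, fun _ => rfl⟩

def comp (g : GraphHom K G) (f : GraphHom H K) : GraphHom H G where
  vertex := g.vertex ∘ f.vertex
  edge := g.edge ∘ f.edge
  src_edge e := by simp only [Function.comp_apply, g.src_edge, f.src_edge]
  tgt_edge e := by simp only [Function.comp_apply, g.tgt_edge, f.tgt_edge]

def toPrefunctor (f : GraphHom H G) : H.V ⥤q G.V where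
  obj := f.vertex
  map a := ⟨f.edge a.1, by rw [f.src_edge, a.2.1], by rw [f.tgt_edge, a.2.2]⟩

def toHom (f : GraphHom H G) : H ⟶ G := Cat.freeMap f.toPrefunctor

theorem toHom_id : (GraphHom.id G).toHom = 𝟙 G := Cat.freeMap_id G.V

theorem toHom_comp (g : GraphHom K G) (f : GraphHom H K) :
    (g.comp f).toHom = f.toHom ≫ g.toHom :=
  Cat.freeMap_comp f.toPrefunctor g.toPrefunctor

theorem isIsomorphicTo_of_comp_eq_id (f : GraphHom H G) (g : GraphHom G H)
    (hgf : g.comp f = GraphHom.id H) (hfg : f.comp g = GraphHom.id G) : IsIsomorphicTo H G :=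
  ⟨f.toHom, ⟨g.toHom, by rw [← toHom_comp, hgf, toHom_id], by rw [← toHom_comp, hfg, toHom_id]⟩⟩

end GraphHom

structure GraphEmbedding (H G : CausalNet) extends GraphHom H G where
  vertex_injective : Function.Injective vertex
  edge_injective : Function.Injective edge

namespace GraphEmbedding

def refl (G : CausalNet) : GraphEmbedding G G :=
  ⟨GraphHom.id G, Function.injective_id, Function.injective_id⟩

def trans (f : GraphEmbedding H K) (g : GraphEmbedding K G) : GraphEmbedding H G :=
  ⟨g.toGraphHom.comp f.toGraphHom, g.vertex_injective.comp f.vertex_injective,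
    g.edge_injective.comp f.edge_injective⟩

theorem isEmbedding_toHom (f : GraphEmbedding H G) : IsEmbedding f.toHom := by
  refine ⟨⟨f.vertex_injective, fun _ _ => f.toPrefunctor.mapPath_injective f.vertex_injective
    fun hab => Subtype.ext (f.edge_injective (congrArg Subtype.val hab))⟩, fun e he => ?_⟩
  exact absurd he (by decide : ¬ 2 ≤ 1)

theorem isIsomorphicTo_of_surjective (f : GraphEmbedding H G)
    (hV : Function.Surjective f.vertex) (hE : Function.Surjective f.edge) :
    IsIsomorphicTo H G := by
  let g : GraphHom G H :=
    { vertex := Function.surjInv hV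
      edge := Function.surjInv hE
      src_edge := fun e => f.vertex_injective <| by
        rw [← f.src_edge, Function.surjInv_eq hE, Function.surjInv_eq hV]
      tgt_edge := fun e => f.vertex_injective <| by
        rw [← f.tgt_edge, Function.surjInv_eq hE, Function.surjInv_eq hV] }
  refine f.toGraphHom.isIsomorphicTo_of_comp_eq_id g ?_ ?_ <;> ext x
  · exact Function.leftInverse_surjInv ⟨f.vertex_injective, hV⟩ x
  · exact Function.leftInverse_surjInv ⟨f.edge_injective, hE⟩ x
  · exact Function.surjInv_eq hV x
  · exact Function.surjInv_eq hE x

end GraphEmbedding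

theorem nonempty_graphEmbedding_of_isEmbedding {φ : H ⟶ G} (hφ : IsEmbedding φ) :
    Nonempty (GraphEmbedding H G) := by
  have hedge : ∀ (a b : H.V) (f : a ⟶ b), ∃ g : vmap φ a ⟶ vmap φ b, pmap φ f.toPath = g.toPath :=
    fun _ _ f => (pmap φ f.toPath).exists_eq_toPath_of_length_eq_one (hφ.length_pmap_toPath f)
  choose g hg using hedge
  -- Stated for arrows with arbitrary endpoints, so that equal endpoints can be `subst`ed.
  have hinj : ∀ {a b c d : H.V} (f : a ⟶ b) (f' : c ⟶ d),
      homEdge (g _ _ f) = homEdge (g _ _ f') → homEdge f = homEdge f' := by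
    intro a b c d f f' h
    obtain rfl : a = c := hφ.1.1 ((g _ _ f).2.1.symm.trans ((congrArg G.src h).trans (g _ _ f').2.1))
    obtain rfl : b = d := hφ.1.1 ((g _ _ f).2.2.symm.trans ((congrArg G.tgt h).trans (g _ _ f').2.2))
    have hpath : f.toPath = f'.toPath := hφ.1.2 _ _ _ _ (by rw [hg, hg, Subtype.ext h])
    rw [Quiver.Hom.toPath_injective hpath]
  exact ⟨{ vertex := vmap φ
           edge := fun e => homEdge (g _ _ (edgeHom H e))
           src_edge := fun e => (g _ _ (edgeHom H e)).2.1
           tgt_edge := fun e => (g _ _ (edgeHom H e)).2.2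
           vertex_injective := hφ.1.1
           edge_injective := fun _ _ h => hinj _ _ h }⟩

theorem IsIsomorphicTo.nonempty_graphEmbedding (h : IsIsomorphicTo H G) :
    Nonempty (GraphEmbedding H G) :=
  let ⟨φ, _⟩ := h
  nonempty_graphEmbedding_of_isEmbedding (isEmbedding_of_isIso φ)

noncomputable def deleteEdge (G : CausalNet) (e₀ : G.E) : CausalNet where
  V := G.V
  E := {e : G.E // e ≠ e₀}
  src e := G.src e.1
  tgt e := G.tgt e.1
  fintypeV := G.fintypeV
  fintypeE := Fintype.ofFinite _
  acyclic := noCycleData_of_map _ _ G id Subtype.val (fun _ => rfl) (fun _ => rfl)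

noncomputable def deleteVertex (G : CausalNet) (v₀ : G.V) (hv₀ : IsolatedVertex G v₀) :
    CausalNet where
  V := {v : G.V // v ≠ v₀}
  E := G.E
  src e := ⟨G.src e, (hv₀ e).1⟩
  tgt e := ⟨G.tgt e, (hv₀ e).2⟩
  fintypeV := Fintype.ofFinite _
  fintypeE := G.fintypeE
  acyclic := noCycleData_of_map _ _ G Subtype.val id (fun _ => rfl) (fun _ => rfl)

theorem subNetStep_deleteEdge (G : CausalNet) (e₀ : G.E) : SubNetStep G (deleteEdge G e₀) :=
  Or.inl ⟨e₀, Equiv.refl _, Equiv.refl _, fun _ => ⟨rfl, rfl⟩⟩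

theorem subNetStep_deleteVertex (G : CausalNet) (v₀ : G.V) (hv₀ : IsolatedVertex G v₀) :
    SubNetStep G (deleteVertex G v₀ hv₀) :=
  Or.inr (Or.inl ⟨v₀, hv₀, Equiv.refl _, Equiv.refl _, fun _ => ⟨rfl, rfl⟩⟩)

theorem SubNetStep.nonempty_graphEmbedding {A B : CausalNet} (h : SubNetStep A B) :
    Nonempty (GraphEmbedding B A) := by
  rcases h with ⟨e₀, fV, fE, hfE⟩ | ⟨v₀, -, fV, fE, hfE⟩ | hiso
  · exact ⟨⟨⟨fV, fun e => (fE e).1, fun e => (hfE e).1, fun e => (hfE e).2⟩,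
      fV.injective, Subtype.val_injective.comp fE.injective⟩⟩
  · exact ⟨⟨⟨fun v => (fV v).1, fE, fun e => (hfE e).1, fun e => (hfE e).2⟩,
      Subtype.val_injective.comp fV.injective, fE.injective⟩⟩
  · exact hiso.symm.nonempty_graphEmbedding

theorem nonempty_graphEmbedding_of_reflTransGen (h : Relation.ReflTransGen SubNetStep G H) :
    Nonempty (GraphEmbedding H G) := by
  induction h with
  | refl => exact ⟨GraphEmbedding.refl G⟩
  | tail _ hstep ih => exact ⟨hstep.nonempty_graphEmbedding.some.trans ih.some⟩

namespace GraphEmbedding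

def toDeleteEdge (f : GraphEmbedding H G) {e₀ : G.E} (he₀ : ∀ e, f.edge e ≠ e₀) :
    GraphEmbedding H (deleteEdge G e₀) :=
  ⟨⟨f.vertex, fun e => ⟨f.edge e, he₀ e⟩, f.src_edge, f.tgt_edge⟩, f.vertex_injective,
    fun _ _ h => f.edge_injective (congrArg Subtype.val h)⟩

def toDeleteVertex (f : GraphEmbedding H G) {v₀ : G.V} (hv₀ : IsolatedVertex G v₀)
    (hf : ∀ v, f.vertex v ≠ v₀) : GraphEmbedding H (deleteVertex G v₀ hv₀) :=
  ⟨⟨fun v => ⟨f.vertex v, hf v⟩, f.edge, fun e => Subtype.ext (f.src_edge e),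
    fun e => Subtype.ext (f.tgt_edge e)⟩,
    fun _ _ h => f.vertex_injective (congrArg Subtype.val h), f.edge_injective⟩

theorem isolatedVertex_of_forall_ne (f : GraphEmbedding H G) (hE : Function.Surjective f.edge)
    {v₀ : G.V} (hf : ∀ v, f.vertex v ≠ v₀) : IsolatedVertex G v₀ := by
  intro e
  obtain ⟨e, rfl⟩ := hE e
  rw [f.src_edge, f.tgt_edge]
  exact ⟨hf _, hf _⟩

theorem reflTransGen_subNetStep {H G : CausalNet} (f : GraphEmbedding H G) :
    Relation.ReflTransGen SubNetStep G H := by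
  by_cases hE : Function.Surjective f.edge
  · by_cases hV : Function.Surjective f.vertex
    · exact .single (Or.inr (Or.inr (f.isIsomorphicTo_of_surjective hV hE).symm))
    · obtain ⟨v₀, hv₀⟩ := not_forall.mp hV
      have hiso := f.isolatedVertex_of_forall_ne hE (not_exists.mp hv₀)
      exact .head (subNetStep_deleteVertex G v₀ hiso)
        (reflTransGen_subNetStep (f.toDeleteVertex hiso (not_exists.mp hv₀)))
  · obtain ⟨e₀, he₀⟩ := not_forall.mp hE
    exact .head (subNetStep_deleteEdge G e₀)
      (reflTransGen_subNetStep (f.toDeleteEdge (not_exists.mp he₀)))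
termination_by Nat.card G.V + Nat.card G.E
decreasing_by
  · have : Nat.card {v : G.V // v ≠ v₀} < Nat.card G.V := Finite.card_subtype_lt (x := v₀) (by simp)
    change Nat.card {v : G.V // v ≠ v₀} + Nat.card G.E < _
    omega
  · have : Nat.card {e : G.E // e ≠ e₀} < Nat.card G.E := Finite.card_subtype_lt (x := e₀) (by simp)
    change Nat.card G.V + Nat.card {e : G.E // e ≠ e₀} < _
    omega

def ofMkSub (G : CausalNet) (Vs : Set G.V) (Es : Set G.E) (hs : ∀ e ∈ Es, G.src e ∈ Vs)
    (ht : ∀ e ∈ Es, G.tgt e ∈ Vs) : GraphEmbedding (mkSub G Vs Es hs ht) G :=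
  ⟨⟨Subtype.val, Subtype.val, fun _ => rfl, fun _ => rfl⟩, Subtype.val_injective,
    Subtype.val_injective⟩

theorem src_mem_range (f : GraphEmbedding H G) :
    ∀ e ∈ Set.range f.edge, G.src e ∈ Set.range f.vertex := by
  rintro _ ⟨e, rfl⟩
  exact ⟨H.src e, (f.src_edge e).symm⟩

theorem tgt_mem_range (f : GraphEmbedding H G) :
    ∀ e ∈ Set.range f.edge, G.tgt e ∈ Set.range f.vertex := by
  rintro _ ⟨e, rfl⟩
  exact ⟨H.tgt e, (f.tgt_edge e).symm⟩

theorem isIsomorphicTo_mkSub_range (f : GraphEmbedding H G) :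
    IsIsomorphicTo H
      (mkSub G (Set.range f.vertex) (Set.range f.edge) f.src_mem_range f.tgt_mem_range) :=
  isIsomorphicTo_of_surjective
    ⟨⟨Set.rangeFactorization f.vertex, Set.rangeFactorization f.edge,
      fun e => Subtype.ext (f.src_edge e), fun e => Subtype.ext (f.tgt_edge e)⟩,
      Set.rangeFactorization_injective.mpr f.vertex_injective,
      Set.rangeFactorization_injective.mpr f.edge_injective⟩
    Set.rangeFactorization_surjective Set.rangeFactorization_surjective

end GraphEmbedding

theorem subCausalNet_characterizations (H G : CausalNet) :
    ((∃ (Vs : Set G.V) (Es : Set G.E)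
        (hs : ∀ e ∈ Es, G.src e ∈ Vs) (ht : ∀ e ∈ Es, G.tgt e ∈ Vs),
        IsIsomorphicTo H (mkSub G Vs Es hs ht)) ↔
      (∃ φ : H ⟶ G, IsEmbedding φ)) ∧
    ((∃ φ : H ⟶ G, IsEmbedding φ) ↔ Relation.ReflTransGen SubNetStep G H) := by
  have hsub : (∃ (Vs : Set G.V) (Es : Set G.E)
      (hs : ∀ e ∈ Es, G.src e ∈ Vs) (ht : ∀ e ∈ Es, G.tgt e ∈ Vs),
      IsIsomorphicTo H (mkSub G Vs Es hs ht)) ↔ Nonempty (GraphEmbedding H G) :=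
    ⟨fun ⟨Vs, Es, hs, ht, hiso⟩ =>
      ⟨hiso.nonempty_graphEmbedding.some.trans (GraphEmbedding.ofMkSub G Vs Es hs ht)⟩,
      fun ⟨f⟩ => ⟨_, _, _, _, f.isIsomorphicTo_mkSub_range⟩⟩
  have hemb : (∃ φ : H ⟶ G, IsEmbedding φ) ↔ Nonempty (GraphEmbedding H G) :=
    ⟨fun ⟨_, hφ⟩ => nonempty_graphEmbedding_of_isEmbedding hφ,
      fun ⟨f⟩ => ⟨f.toHom, f.isEmbedding_toHom⟩⟩
  have hsteps : Relation.ReflTransGen SubNetStep G H ↔ Nonempty (GraphEmbedding H G) :=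
    ⟨nonempty_graphEmbedding_of_reflTransGen, fun ⟨f⟩ => f.reflTransGen_subNetStep⟩
  exact ⟨hsub.trans hemb.symm, hemb.trans hsteps.symm⟩

end CausalNets
end
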